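/- arXiv:1507.08769 — 4 statements merged into one kernel-verified Lean document; each statement's English description precedes it below -/
import Mathlib

section
/- Let n ≥ 1. For g ∈ GL(n+1, ℂ) written in blocks g = (A b; c d) with A an n×n complex matrix, b ∈ ℂⁿ a column, c a row vector of length n, and d ∈ ℂ, and for z ∈ ℂⁿ with c·z + d ≠ 0, define g·z := (c·z + d)⁻¹ (A z + b), and define the (n+1)×(n+1) matrix b(g,z) := (fromBlocks I (−(g·z)) 0 1) * g * (fromBlocks I z 0 1), where fromBlocks I w 0 1 denotes the block unitriangular matrix with upper-right block the column w. Then: (i) the upper-right block of b(g,z) is zero; in fact b(g,z) = fromBlocks (A − (g·z) c) 0 c (c·z + d); and (ii) the multiplier identity holds: for g, h ∈ GL(n+1,ℂ) and z ∈ ℂⁿ with c_h·z + d_h ≠ 0 and c_g·(h·z) + d_g ≠ 0, one has b(gh, z) = b(g, h·z) * b(h, z). -/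
open Matrix

noncomputable section

/-- The upper-left `n × n` block `A` of an `(n+1) × (n+1)` matrix `g = (A b; c d)`. -/
def Ablk {n : ℕ} (g : Matrix (Fin n ⊕ Unit) (Fin n ⊕ Unit) ℂ) : Matrix (Fin n) (Fin n) ℂ :=
  g.toBlocks₁₁

/-- The upper-right column `b` of `g = (A b; c d)`. -/
def bcol {n : ℕ} (g : Matrix (Fin n ⊕ Unit) (Fin n ⊕ Unit) ℂ) : Fin n → ℂ :=
  fun i => g (Sum.inl i) (Sum.inr ())

/-- The lower-left row `c` of `g = (A b; c d)`. -/
def crow {n : ℕ} (g : Matrix (Fin n ⊕ Unit) (Fin n ⊕ Unit) ℂ) : Fin n → ℂ :=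
  fun j => g (Sum.inr ()) (Sum.inl j)

/-- The lower-right scalar `d` of `g = (A b; c d)`. -/
def dent {n : ℕ} (g : Matrix (Fin n ⊕ Unit) (Fin n ⊕ Unit) ℂ) : ℂ :=
  g (Sum.inr ()) (Sum.inr ())

/-- The denominator `c·z + d` of the Möbius action of `g = (A b; c d)` at `z ∈ ℂⁿ`. -/
def den {n : ℕ} (g : Matrix (Fin n ⊕ Unit) (Fin n ⊕ Unit) ℂ) (z : Fin n → ℂ) : ℂ :=
  crow g ⬝ᵥ z + dent g

/-- The Möbius action `g·z = (c·z + d)⁻¹ (A z + b)` of `g = (A b; c d)` on `z ∈ ℂⁿ`. -/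
noncomputable def mact {n : ℕ} (g : Matrix (Fin n ⊕ Unit) (Fin n ⊕ Unit) ℂ)
    (z : Fin n → ℂ) : Fin n → ℂ :=
  (den g z)⁻¹ • (Ablk g *ᵥ z + bcol g)

/-- A vector `v ∈ ℂⁿ` as an `n × 1` column matrix. -/
def colm {n : ℕ} (v : Fin n → ℂ) : Matrix (Fin n) Unit ℂ := Matrix.of fun i _ => v i

/-- A vector `v ∈ ℂⁿ` as a `1 × n` row matrix. -/
def rowm {n : ℕ} (v : Fin n → ℂ) : Matrix Unit (Fin n) ℂ := Matrix.of fun _ j => v j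

/-- A scalar `a ∈ ℂ` as a `1 × 1` matrix. -/
def sclm (a : ℂ) : Matrix Unit Unit ℂ := Matrix.of fun _ _ => a

/-- The block unitriangular matrix `E w = (I w; 0 1)`. -/
def Emat {n : ℕ} (w : Fin n → ℂ) : Matrix (Fin n ⊕ Unit) (Fin n ⊕ Unit) ℂ :=
  fromBlocks 1 (colm w) 0 1

/-- The canonical automorphy factor `b(g,z) = E(-(g·z)) * g * E(z)`. -/
def bmat {n : ℕ} (g : Matrix (Fin n ⊕ Unit) (Fin n ⊕ Unit) ℂ) (z : Fin n → ℂ) :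
    Matrix (Fin n ⊕ Unit) (Fin n ⊕ Unit) ℂ :=
  Emat (-(mact g z)) * g * Emat z

/-!
In homogeneous coordinates `g (z, 1) = (c·z + d) (g·z, 1)`, so the Möbius action is the linear
action on lines and `(gh)·z = g·(h·z)`. Right multiplication by `E z` replaces the last column of
`g` by `g (z, 1)`, and left multiplication by `E (-(g·z))` then clears its upper part; this is (i).
For (ii), insert `E (h·z) * E (-(h·z)) = 1` between `g` and `h`.
-/

section

variable {n : ℕ}

def homog (z : Fin n → ℂ) : Fin n ⊕ Unit → ℂ :=
  Sum.elim z 1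

lemma mulVec_homog (g : Matrix (Fin n ⊕ Unit) (Fin n ⊕ Unit) ℂ) (z : Fin n → ℂ) :
    g *ᵥ homog z = Sum.elim (Ablk g *ᵥ z + bcol g) fun _ => den g z := by
  ext (i | ⟨⟩) <;>
    simp [homog, mulVec, dotProduct, Fintype.sum_sum_type, Ablk, toBlocks₁₁, bcol, den, crow,
      dent]

lemma den_smul_mact {g : Matrix (Fin n ⊕ Unit) (Fin n ⊕ Unit) ℂ} {z : Fin n → ℂ}
    (hz : den g z ≠ 0) : den g z • mact g z = Ablk g *ᵥ z + bcol g := by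
  rw [mact, smul_inv_smul₀ hz]

lemma mulVec_homog_of_den_ne_zero {g : Matrix (Fin n ⊕ Unit) (Fin n ⊕ Unit) ℂ} {z : Fin n → ℂ}
    (hz : den g z ≠ 0) : g *ᵥ homog z = den g z • homog (mact g z) := by
  rw [mulVec_homog, homog, ← den_smul_mact hz]
  ext (i | ⟨⟩) <;> simp

lemma mact_eq_of_mulVec_homog {g : Matrix (Fin n ⊕ Unit) (Fin n ⊕ Unit) ℂ}
    {z w : Fin n → ℂ} {a : ℂ} (ha : a ≠ 0) (h : g *ᵥ homog z = a • homog w) :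
    mact g z = w := by
  rw [mulVec_homog] at h
  have hden : den g z = a := by simpa [homog] using congrFun h (Sum.inr ())
  have hnum : Ablk g *ᵥ z + bcol g = a • w := funext fun i => by
    simpa [homog] using congrFun h (Sum.inl i)
  rw [mact, hden, hnum, inv_smul_smul₀ ha]

lemma mact_mul {g h : Matrix (Fin n ⊕ Unit) (Fin n ⊕ Unit) ℂ} {z : Fin n → ℂ}
    (hh : den h z ≠ 0) (hg : den g (mact h z) ≠ 0) :
    mact (g * h) z = mact g (mact h z) := by
  refine mact_eq_of_mulVec_homog (mul_ne_zero hh hg) ?_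
  rw [← mulVec_mulVec, mulVec_homog_of_den_ne_zero hh, mulVec_smul,
    mulVec_homog_of_den_ne_zero hg, smul_smul]

lemma colm_eq_replicateCol (v : Fin n → ℂ) : colm v = replicateCol Unit v := rfl

lemma rowm_eq_replicateRow (v : Fin n → ℂ) : rowm v = replicateRow Unit v := rfl

lemma fromBlocks_blocks (g : Matrix (Fin n ⊕ Unit) (Fin n ⊕ Unit) ℂ) :
    fromBlocks (Ablk g) (colm (bcol g)) (rowm (crow g)) (sclm (dent g)) = g := by
  ext (i | i) (j | j) <;> rfl

lemma mul_Emat (g : Matrix (Fin n ⊕ Unit) (Fin n ⊕ Unit) ℂ) (z : Fin n → ℂ) :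
    g * Emat z =
      fromBlocks (Ablk g) (colm (Ablk g *ᵥ z + bcol g)) (rowm (crow g)) (sclm (den g z)) := by
  conv_lhs => rw [← fromBlocks_blocks g]
  rw [Emat, fromBlocks_multiply]
  congr 1 <;> ext <;> simp [colm, rowm, sclm, den, mul_apply, mulVec, dotProduct]

lemma Emat_mul_fromBlocks (w : Fin n → ℂ) (A : Matrix (Fin n) (Fin n) ℂ)
    (B : Matrix (Fin n) Unit ℂ) (C : Matrix Unit (Fin n) ℂ) (D : Matrix Unit Unit ℂ) :
    Emat w * fromBlocks A B C D = fromBlocks (A + colm w * C) (B + colm w * D) C D := by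
  simp [Emat, fromBlocks_multiply]

lemma Emat_add (w w' : Fin n → ℂ) : Emat (w + w') = Emat w * Emat w' := by
  rw [show Emat w' = fromBlocks 1 (colm w') 0 1 from rfl, Emat_mul_fromBlocks, Emat]
  congr 1 <;> ext <;> simp [colm, add_comm]

lemma Emat_zero : Emat (0 : Fin n → ℂ) = 1 := by
  rw [Emat, ← fromBlocks_one]
  congr

lemma bmat_eq_fromBlocks {g : Matrix (Fin n ⊕ Unit) (Fin n ⊕ Unit) ℂ} {z : Fin n → ℂ}
    (hz : den g z ≠ 0) :
    bmat g z = fromBlocks (Ablk g - vecMulVec (mact g z) (crow g)) 0 (rowm (crow g))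
      (sclm (den g z)) := by
  rw [bmat, mul_assoc, mul_Emat, ← den_smul_mact hz, Emat_mul_fromBlocks]
  congr 1
  · rw [vecMulVec_eq Unit, ← colm_eq_replicateCol, ← rowm_eq_replicateRow, sub_eq_add_neg,
      ← Matrix.neg_mul]
    rfl
  · ext; simp [colm, sclm, mul_apply, mul_comm]

lemma bmat_mul {g h : Matrix (Fin n ⊕ Unit) (Fin n ⊕ Unit) ℂ} {z : Fin n → ℂ}
    (hh : den h z ≠ 0) (hg : den g (mact h z) ≠ 0) :
    bmat (g * h) z = bmat g (mact h z) * bmat h z := by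
  have hE : Emat (mact h z) * Emat (-mact h z) = 1 := by
    rw [← Emat_add, add_neg_cancel, Emat_zero]
  calc bmat (g * h) z
      = Emat (-mact g (mact h z)) * g * (Emat (mact h z) * Emat (-mact h z)) * h * Emat z := by
        rw [bmat, mact_mul hh hg, hE, mul_one, mul_assoc _ g h]
    _ = bmat g (mact h z) * bmat h z := by simp only [bmat, Matrix.mul_assoc]

end

theorem bmat_eq_and_multiplier_general (n : ℕ) :
    (∀ (g : GL (Fin n ⊕ Unit) ℂ) (z : Fin n → ℂ),
      den (g : Matrix (Fin n ⊕ Unit) (Fin n ⊕ Unit) ℂ) z ≠ 0 →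
        bmat (g : Matrix (Fin n ⊕ Unit) (Fin n ⊕ Unit) ℂ) z =
          fromBlocks
            (Ablk (g : Matrix (Fin n ⊕ Unit) (Fin n ⊕ Unit) ℂ) -
              vecMulVec (mact (g : Matrix (Fin n ⊕ Unit) (Fin n ⊕ Unit) ℂ) z)
                (crow (g : Matrix (Fin n ⊕ Unit) (Fin n ⊕ Unit) ℂ)))
            0
            (rowm (crow (g : Matrix (Fin n ⊕ Unit) (Fin n ⊕ Unit) ℂ)))
            (sclm (den (g : Matrix (Fin n ⊕ Unit) (Fin n ⊕ Unit) ℂ) z))) ∧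
    (∀ (g h : GL (Fin n ⊕ Unit) ℂ) (z : Fin n → ℂ),
      den (h : Matrix (Fin n ⊕ Unit) (Fin n ⊕ Unit) ℂ) z ≠ 0 →
      den (g : Matrix (Fin n ⊕ Unit) (Fin n ⊕ Unit) ℂ)
          (mact (h : Matrix (Fin n ⊕ Unit) (Fin n ⊕ Unit) ℂ) z) ≠ 0 →
        bmat ((g * h : GL (Fin n ⊕ Unit) ℂ) : Matrix (Fin n ⊕ Unit) (Fin n ⊕ Unit) ℂ) z =
          bmat (g : Matrix (Fin n ⊕ Unit) (Fin n ⊕ Unit) ℂ)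
              (mact (h : Matrix (Fin n ⊕ Unit) (Fin n ⊕ Unit) ℂ) z) *
            bmat (h : Matrix (Fin n ⊕ Unit) (Fin n ⊕ Unit) ℂ) z) := by
  exact ⟨fun g z hz => bmat_eq_fromBlocks hz,
    fun g h z hh hg => by rw [Units.val_mul]; exact bmat_mul hh hg⟩

/-- (i) `b(g,z)` is block lower triangular, equal to
`(A - (g·z)c  0; c  c·z+d)`; and (ii) the multiplier identity
`b(gh, z) = b(g, h·z) * b(h, z)` holds wherever everything is defined. -/
theorem bmat_eq_and_multiplier (n : ℕ) (hn : 1 ≤ n) :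
    (∀ (g : GL (Fin n ⊕ Unit) ℂ) (z : Fin n → ℂ),
      den (g : Matrix (Fin n ⊕ Unit) (Fin n ⊕ Unit) ℂ) z ≠ 0 →
        bmat (g : Matrix (Fin n ⊕ Unit) (Fin n ⊕ Unit) ℂ) z =
          fromBlocks
            (Ablk (g : Matrix (Fin n ⊕ Unit) (Fin n ⊕ Unit) ℂ) -
              vecMulVec (mact (g : Matrix (Fin n ⊕ Unit) (Fin n ⊕ Unit) ℂ) z)
                (crow (g : Matrix (Fin n ⊕ Unit) (Fin n ⊕ Unit) ℂ)))
            0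
            (rowm (crow (g : Matrix (Fin n ⊕ Unit) (Fin n ⊕ Unit) ℂ)))
            (sclm (den (g : Matrix (Fin n ⊕ Unit) (Fin n ⊕ Unit) ℂ) z))) ∧
    (∀ (g h : GL (Fin n ⊕ Unit) ℂ) (z : Fin n → ℂ),
      den (h : Matrix (Fin n ⊕ Unit) (Fin n ⊕ Unit) ℂ) z ≠ 0 →
      den (g : Matrix (Fin n ⊕ Unit) (Fin n ⊕ Unit) ℂ)
          (mact (h : Matrix (Fin n ⊕ Unit) (Fin n ⊕ Unit) ℂ) z) ≠ 0 →
        bmat ((g * h : GL (Fin n ⊕ Unit) ℂ) : Matrix (Fin n ⊕ Unit) (Fin n ⊕ Unit) ℂ) z =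
          bmat (g : Matrix (Fin n ⊕ Unit) (Fin n ⊕ Unit) ℂ)
              (mact (h : Matrix (Fin n ⊕ Unit) (Fin n ⊕ Unit) ℂ) z) *
            bmat (h : Matrix (Fin n ⊕ Unit) (Fin n ⊕ Unit) ℂ) z) :=
  bmat_eq_and_multiplier_general n
end
end

section
/- Let n ≥ 1. For g ∈ GL(n+1, ℂ) written in blocks g = (A b; c d) with A an n×n complex matrix, b ∈ ℂⁿ a column, c a row vector of length n, and d ∈ ℂ, and for z ∈ ℂⁿ with c·z + d ≠ 0, set y(g,z) := (c·z + d)⁻¹ c (a row vector of length n), and define the (n+1)×(n+1) matrices Y(g,z) := fromBlocks 0 0 (y(g,z)) 0 and, for x ∈ ℂⁿ, X := fromBlocks 0 x 0 0. Then the map z ↦ y(g,z) is holomorphic on { z | c·z + d ≠ 0 } and its derivative at z in the direction x equals −(y(g,z)·x) • y(g,z); equivalently, the derivative of z ↦ Y(g,z) at z in the direction x equals (1/2) ⁅Y(g,z), ⁅Y(g,z), X⁆⁆, where ⁅·,·⁆ denotes the matrix commutator. -/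
open Matrix

noncomputable section

attribute [local instance] Matrix.normedAddCommGroup Matrix.normedSpace

/-- The row vector `y(g,z) = (c·z + d)⁻¹ c`. -/
def yrow {n : ℕ} (g : Matrix (Fin n ⊕ Unit) (Fin n ⊕ Unit) ℂ) (z : Fin n → ℂ) :
    Fin n → ℂ :=
  (den g z)⁻¹ • crow g

/-- The strictly lower triangular matrix `Y(g,z) = (0 0; y(g,z) 0)`. -/
def Ymat {n : ℕ} (g : Matrix (Fin n ⊕ Unit) (Fin n ⊕ Unit) ℂ) (z : Fin n → ℂ) :
    Matrix (Fin n ⊕ Unit) (Fin n ⊕ Unit) ℂ :=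
  fromBlocks 0 0 (rowm (yrow g z)) 0

/-- The strictly upper triangular matrix `X = (0 x; 0 0)` for `x ∈ ℂⁿ`. -/
def Xmat {n : ℕ} (x : Fin n → ℂ) : Matrix (Fin n ⊕ Unit) (Fin n ⊕ Unit) ℂ :=
  fromBlocks 0 (colm x) 0 0

/-!
Both `y(g,z) = (c·z + d)⁻¹ c` and `Y(g,z)` are the scalar function `(c·z + d)⁻¹` times a constant,
whose derivative in direction `x` is `-(c·z + d)⁻² (c·x) = -(y·x) (c·z + d)⁻¹`. A block
computation gives `⁅Y, ⁅Y, X⁆⁆ = -2 (y·x) Y`, since `Y X Y = (y·x) Y` while `X Y Y = Y Y X = 0`.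
-/

lemma fromBlocks_zero_zero_smul_zero {l m o p R α : Type*} [Zero α] [SMulZeroClass R α] (s : R)
    (C : Matrix o l α) :
    (fromBlocks 0 0 (s • C) 0 : Matrix (m ⊕ o) (l ⊕ p) α) = s • fromBlocks 0 0 C 0 := by
  ext (i | i) (j | j) <;> simp

variable {n : ℕ}

lemma rowm_smul (a : ℂ) (v : Fin n → ℂ) : rowm (a • v) = a • rowm v := rfl

lemma rowm_mul_colm_mul_rowm (y x : Fin n → ℂ) :
    rowm y * (colm x * rowm y) = (y ⬝ᵥ x) • rowm y := by
  ext i j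
  simp [rowm, colm, Matrix.mul_apply, dotProduct, Finset.sum_mul, mul_assoc]

lemma hasFDerivAt_den (g : Matrix (Fin n ⊕ Unit) (Fin n ⊕ Unit) ℂ) (z : Fin n → ℂ) :
    HasFDerivAt (den g) (LinearMap.toContinuousLinearMap (dotProductBilin ℂ ℂ (crow g))) z :=
  (LinearMap.toContinuousLinearMap (dotProductBilin ℂ ℂ (crow g))).hasFDerivAt.add_const _

lemma hasFDerivAt_inv_den (g : Matrix (Fin n ⊕ Unit) (Fin n ⊕ Unit) ℂ) {z : Fin n → ℂ}
    (hz : den g z ≠ 0) :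
    HasFDerivAt (fun w => (den g w)⁻¹)
      (-(den g z)⁻¹ • LinearMap.toContinuousLinearMap (dotProductBilin ℂ ℂ (yrow g z))) z := by
  refine ((hasDerivAt_inv hz).comp_hasFDerivAt z (hasFDerivAt_den g z)).congr_fderiv ?_
  ext x
  simp only [_root_.smul_apply, LinearMap.coe_toContinuousLinearMap', dotProductBilin_apply_apply,
    smul_eq_mul, neg_mul, yrow, map_smul, neg_inj]
  ring

lemma hasFDerivAt_inv_den_smul {F : Type*} [NormedAddCommGroup F] [NormedSpace ℂ F]
    (g : Matrix (Fin n ⊕ Unit) (Fin n ⊕ Unit) ℂ) {z : Fin n → ℂ} (hz : den g z ≠ 0) (v : F) :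
    ∃ L : (Fin n → ℂ) →L[ℂ] F, HasFDerivAt (fun w => (den g w)⁻¹ • v) L z ∧
      ∀ x, L x = -(yrow g z ⬝ᵥ x) • (den g z)⁻¹ • v := by
  refine ⟨_, (hasFDerivAt_inv_den g hz).smul_const v, fun x => ?_⟩
  simp only [ContinuousLinearMap.smulRight_apply, _root_.smul_apply,
    LinearMap.coe_toContinuousLinearMap', dotProductBilin_apply_apply, smul_eq_mul, smul_smul]
  congr 1
  ring

lemma Ymat_eq_inv_den_smul (g : Matrix (Fin n ⊕ Unit) (Fin n ⊕ Unit) ℂ) (z : Fin n → ℂ) :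
    Ymat g z = (den g z)⁻¹ • fromBlocks 0 0 (rowm (crow g)) 0 := by
  rw [Ymat, yrow, rowm_smul, fromBlocks_zero_zero_smul_zero]

lemma half_lie_Ymat_lie_Ymat_Xmat (g : Matrix (Fin n ⊕ Unit) (Fin n ⊕ Unit) ℂ)
    (z x : Fin n → ℂ) :
    (1 / 2 : ℂ) • ⁅Ymat g z, ⁅Ymat g z, Xmat x⁆⁆ = -(yrow g z ⬝ᵥ x) • Ymat g z := by
  simp only [Ymat, Xmat, Ring.lie_def, fromBlocks_multiply, Matrix.mul_zero, Matrix.zero_mul,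
    add_zero, zero_add, Matrix.mul_sub, Matrix.sub_mul, Matrix.mul_assoc, rowm_mul_colm_mul_rowm,
    fromBlocks_zero, fromBlocks_zero_zero_smul_zero]
  module

theorem yrow_hasFDerivAt_general (n : ℕ) (g : GL (Fin n ⊕ Unit) ℂ) :
    DifferentiableOn ℂ (yrow (g : Matrix (Fin n ⊕ Unit) (Fin n ⊕ Unit) ℂ))
        {z : Fin n → ℂ | den (g : Matrix (Fin n ⊕ Unit) (Fin n ⊕ Unit) ℂ) z ≠ 0} ∧
      (∀ z : Fin n → ℂ, den (g : Matrix (Fin n ⊕ Unit) (Fin n ⊕ Unit) ℂ) z ≠ 0 →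
        (∃ L : (Fin n → ℂ) →L[ℂ] (Fin n → ℂ),
          HasFDerivAt (yrow (g : Matrix (Fin n ⊕ Unit) (Fin n ⊕ Unit) ℂ)) L z ∧
            ∀ x : Fin n → ℂ,
              L x = -((yrow (g : Matrix (Fin n ⊕ Unit) (Fin n ⊕ Unit) ℂ) z ⬝ᵥ x)) •
                  yrow (g : Matrix (Fin n ⊕ Unit) (Fin n ⊕ Unit) ℂ) z) ∧
        (∃ M : (Fin n → ℂ) →L[ℂ] Matrix (Fin n ⊕ Unit) (Fin n ⊕ Unit) ℂ,
          HasFDerivAt (Ymat (g : Matrix (Fin n ⊕ Unit) (Fin n ⊕ Unit) ℂ)) M z ∧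
            ∀ x : Fin n → ℂ,
              M x = (1 / 2 : ℂ) •
                  ⁅Ymat (g : Matrix (Fin n ⊕ Unit) (Fin n ⊕ Unit) ℂ) z,
                    ⁅Ymat (g : Matrix (Fin n ⊕ Unit) (Fin n ⊕ Unit) ℂ) z, Xmat x⁆⁆)) := by
  set G : Matrix (Fin n ⊕ Unit) (Fin n ⊕ Unit) ℂ := ↑g
  refine ⟨fun z hz => ?_, fun z hz => ⟨hasFDerivAt_inv_den_smul G hz (crow G), ?_⟩⟩
  · obtain ⟨L, hL, -⟩ := hasFDerivAt_inv_den_smul G hz (crow G)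
    exact hL.differentiableAt.differentiableWithinAt
  · obtain ⟨M, hM, hMx⟩ := hasFDerivAt_inv_den_smul G hz
      (fromBlocks 0 0 (rowm (crow G)) 0 : Matrix (Fin n ⊕ Unit) (Fin n ⊕ Unit) ℂ)
    rw [← funext (Ymat_eq_inv_den_smul G)] at hM
    simp only [← Ymat_eq_inv_den_smul] at hMx
    exact ⟨M, hM, fun x => (hMx x).trans (half_lie_Ymat_lie_Ymat_Xmat G z x).symm⟩

/-- `z ↦ y(g,z)` is holomorphic on `{z | c·z + d ≠ 0}` and its derivative at `z` in
direction `x` is `-(y(g,z)·x) • y(g,z)`; equivalently, the derivative of `z ↦ Y(g,z)`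
in direction `x` is `½ ⁅Y(g,z), ⁅Y(g,z), X⁆⁆`. -/
theorem yrow_hasFDerivAt (n : ℕ) (hn : 1 ≤ n) (g : GL (Fin n ⊕ Unit) ℂ) :
    DifferentiableOn ℂ (yrow (g : Matrix (Fin n ⊕ Unit) (Fin n ⊕ Unit) ℂ))
        {z : Fin n → ℂ | den (g : Matrix (Fin n ⊕ Unit) (Fin n ⊕ Unit) ℂ) z ≠ 0} ∧
      (∀ z : Fin n → ℂ, den (g : Matrix (Fin n ⊕ Unit) (Fin n ⊕ Unit) ℂ) z ≠ 0 →
        (∃ L : (Fin n → ℂ) →L[ℂ] (Fin n → ℂ),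
          HasFDerivAt (yrow (g : Matrix (Fin n ⊕ Unit) (Fin n ⊕ Unit) ℂ)) L z ∧
            ∀ x : Fin n → ℂ,
              L x = -((yrow (g : Matrix (Fin n ⊕ Unit) (Fin n ⊕ Unit) ℂ) z ⬝ᵥ x)) •
                  yrow (g : Matrix (Fin n ⊕ Unit) (Fin n ⊕ Unit) ℂ) z) ∧
        (∃ M : (Fin n → ℂ) →L[ℂ] Matrix (Fin n ⊕ Unit) (Fin n ⊕ Unit) ℂ,
          HasFDerivAt (Ymat (g : Matrix (Fin n ⊕ Unit) (Fin n ⊕ Unit) ℂ)) M z ∧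
            ∀ x : Fin n → ℂ,
              M x = (1 / 2 : ℂ) •
                  ⁅Ymat (g : Matrix (Fin n ⊕ Unit) (Fin n ⊕ Unit) ℂ) z,
                    ⁅Ymat (g : Matrix (Fin n ⊕ Unit) (Fin n ⊕ Unit) ℂ) z, Xmat x⁆⁆)) :=
  yrow_hasFDerivAt_general n g
end
end

section
/- Let n ≥ 1 and let J be the (n+1)×(n+1) diagonal matrix fromBlocks I 0 0 (−1), with I the n×n identity. Let g ∈ GL(n+1, ℂ) satisfy gᴴ J g = J (gᴴ the conjugate transpose), and write g = (A b; c d) in blocks with A an n×n complex matrix, b ∈ ℂⁿ a column, c a row vector of length n, and d ∈ ℂ. Then for every z ∈ ℂⁿ with ‖z‖ < 1 (Euclidean norm), one has c·z + d ≠ 0 and ‖(c·z + d)⁻¹ (A z + b)‖ < 1; that is, the Möbius map z ↦ g·z is everywhere defined on the open unit ball of ℂⁿ and maps it into itself. -/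
open Matrix

noncomputable section

/-- The signature `(n,1)` form `J = (I 0; 0 -1)`. -/
def Jmat (n : ℕ) : Matrix (Fin n ⊕ Unit) (Fin n ⊕ Unit) ℂ :=
  fromBlocks 1 0 0 (-1)

/-- The Euclidean norm of a vector in `ℂⁿ`. -/
noncomputable def euclNorm {n : ℕ} (z : Fin n → ℂ) : ℝ :=
  Real.sqrt (∑ i, ‖z i‖ ^ 2)

/-- If `g ∈ GL(n+1, ℂ)` satisfies `gᴴ J g = J`, then the Möbius map `z ↦ g·z` is
defined on the whole open unit ball of `ℂⁿ` and maps it into itself. -/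
theorem mobius_maps_ball_to_ball (n : ℕ) (hn : 1 ≤ n) (g : GL (Fin n ⊕ Unit) ℂ)
    (hg : (g : Matrix (Fin n ⊕ Unit) (Fin n ⊕ Unit) ℂ)ᴴ * Jmat n *
        (g : Matrix (Fin n ⊕ Unit) (Fin n ⊕ Unit) ℂ) = Jmat n)
    (z : Fin n → ℂ) (hz : euclNorm z < 1) :
    den (g : Matrix (Fin n ⊕ Unit) (Fin n ⊕ Unit) ℂ) z ≠ 0 ∧
      euclNorm (mact (g : Matrix (Fin n ⊕ Unit) (Fin n ⊕ Unit) ℂ) z) < 1 := by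
  set M : Matrix (Fin n ⊕ Unit) (Fin n ⊕ Unit) ℂ := (g : Matrix (Fin n ⊕ Unit) (Fin n ⊕ Unit) ℂ)
  set v : Fin n ⊕ Unit → ℂ := Sum.elim z (fun _ => 1) with hv
  set w : Fin n ⊕ Unit → ℂ := M *ᵥ v with hw
  -- the quadratic form identity
  have quad : ∀ u : Fin n ⊕ Unit → ℂ,
      star u ⬝ᵥ (Jmat n *ᵥ u) =
        (∑ i, (‖u (Sum.inl i)‖ : ℂ) ^ 2) - (‖u (Sum.inr ())‖ : ℂ) ^ 2 := by
    intro u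
    have hJ : ∀ x, (Jmat n *ᵥ u) x = Sum.elim (fun i => u (Sum.inl i))
        (fun _ => -u (Sum.inr ())) x := by
      intro x
      cases x with
      | inl i =>
        simp [Jmat, mulVec, dotProduct, Fintype.sum_sum_type, fromBlocks,
          Matrix.one_apply, Finset.sum_ite_eq, mul_comm]
      | inr u' =>
        simp [Jmat, mulVec, dotProduct, Fintype.sum_sum_type, fromBlocks]
    have : star u ⬝ᵥ (Jmat n *ᵥ u) =
        ∑ i, star (u (Sum.inl i)) * u (Sum.inl i) -
          star (u (Sum.inr ())) * u (Sum.inr ()) := by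
      simp only [dotProduct, Fintype.sum_sum_type, hJ]
      simp [Pi.star_apply, mul_neg, sub_eq_add_neg]
    rw [this]
    congr 1
    · exact Finset.sum_congr rfl fun i _ => by
        simpa using RCLike.conj_mul (u (Sum.inl i))
    · simpa using RCLike.conj_mul (u (Sum.inr ()))
  -- invariance of the form under g
  have inv : star w ⬝ᵥ (Jmat n *ᵥ w) = star v ⬝ᵥ (Jmat n *ᵥ v) := by
    rw [hw, star_mulVec, mulVec_mulVec, ← dotProduct_mulVec, mulVec_mulVec,
      ← Matrix.mul_assoc, hg]
  -- identify the blocks of w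
  have wl : ∀ i, w (Sum.inl i) = (Ablk M *ᵥ z + bcol M) i := by
    intro i
    simp [hw, hv, mulVec, dotProduct, Fintype.sum_sum_type, Ablk, bcol, toBlocks₁₁]
  have wr : w (Sum.inr ()) = den M z := by
    simp [hw, hv, mulVec, dotProduct, Fintype.sum_sum_type, den, crow, dent]
  -- the real identity
  set S : ℝ := ∑ i, ‖(Ablk M *ᵥ z + bcol M) i‖ ^ 2 with hS
  set T : ℝ := ∑ i, ‖z i‖ ^ 2 with hT
  have key : (S : ℂ) - (‖den M z‖ : ℂ) ^ 2 = (T : ℂ) - 1 := by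
    have h1 := quad w
    have h2 := quad v
    rw [inv, h2] at h1
    have e1 : (∑ i, (‖w (Sum.inl i)‖ : ℂ) ^ 2) = (S : ℂ) := by
      rw [hS]
      push_cast
      exact Finset.sum_congr rfl fun i _ => by rw [wl i]
    have e2 : (∑ i, (‖v (Sum.inl i)‖ : ℂ) ^ 2) = (T : ℂ) := by
      rw [hT]; push_cast; rfl
    have e3 : (‖v (Sum.inr ())‖ : ℂ) ^ 2 = 1 := by simp [hv]
    rw [e1, wr, e2, e3] at h1
    exact h1.symm
  have keyR : S - ‖den M z‖ ^ 2 = T - 1 := by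
    exact_mod_cast key
  have hT1 : T < 1 := by
    have hTnn : (0:ℝ) ≤ T := Finset.sum_nonneg fun i _ => sq_nonneg _
    have := (Real.sqrt_lt' (by norm_num : (0:ℝ) < 1)).mp (by simpa [euclNorm, hT] using hz)
    simpa using this
  have hSnn : (0:ℝ) ≤ S := Finset.sum_nonneg fun i _ => sq_nonneg _
  have hdpos : 0 < ‖den M z‖ ^ 2 := by nlinarith
  have hden : den M z ≠ 0 := by
    intro h
    rw [h] at hdpos
    simp at hdpos
  refine ⟨hden, ?_⟩
  -- norm of the Möbius image
  have hnorm : euclNorm (mact M z) = Real.sqrt (S / ‖den M z‖ ^ 2) := by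
    unfold euclNorm mact
    congr 1
    rw [hS, Finset.sum_div]
    refine Finset.sum_congr rfl fun i _ => ?_
    rw [Pi.smul_apply, smul_eq_mul, norm_mul, mul_pow, norm_inv]
    field_simp
  rw [hnorm]
  rw [Real.sqrt_lt' (by norm_num : (0:ℝ) < 1)]
  rw [div_lt_iff₀ hdpos]
  nlinarith
end
end

section
/- Let n ≥ 1. For g ∈ GL(n+1, ℂ) written in blocks g = (A b; c d) with A an n×n complex matrix, b ∈ ℂⁿ a column, c a row vector of length n, and d ∈ ℂ, the Möbius map z ↦ g·z := (c·z + d)⁻¹ (A z + b) is holomorphic on { z ∈ ℂⁿ | c·z + d ≠ 0 }, and its derivative at such a point z in the direction x ∈ ℂⁿ equals (c·z + d)⁻¹ (A − (g·z) c) x; that is, the Jacobian matrix of the map z ↦ g·z at z is (c·z + d)⁻¹ K(g,z), where K(g,z) := A − (g·z) c is the upper-left block of the K^ℂ-component k(g,z). -/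
open Matrix

noncomputable section

lemma mobius_key {n : ℕ} (g' : Matrix (Fin n ⊕ Unit) (Fin n ⊕ Unit) ℂ)
    (z : Fin n → ℂ) (hz : den g' z ≠ 0) :
    ∃ L : (Fin n → ℂ) →L[ℂ] (Fin n → ℂ),
      HasFDerivAt (mact g') L z ∧
        ∀ x : Fin n → ℂ,
          L x = (den g' z)⁻¹ • ((Ablk g' - vecMulVec (mact g' z) (crow g')) *ᵥ x) := by
  set c := crow g' with hc
  set A := Ablk g' with hA
  set b := bcol g' with hb
  let Lc : (Fin n → ℂ) →L[ℂ] ℂ :=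
    LinearMap.toContinuousLinearMap
      { toFun := fun x => c ⬝ᵥ x
        map_add' := fun x y => dotProduct_add c x y
        map_smul' := fun r x => dotProduct_smul r c x }
  have hLc : ∀ x, Lc x = c ⬝ᵥ x := fun x => rfl
  let LA : (Fin n → ℂ) →L[ℂ] (Fin n → ℂ) :=
    LinearMap.toContinuousLinearMap (Matrix.mulVecLin A)
  have hLA : ∀ x, LA x = A *ᵥ x := fun x => rfl
  have hden : HasFDerivAt (den g') Lc z :=
    (Lc.hasFDerivAt (x := z)).add_const (dent g')
  have hN : HasFDerivAt (fun z : Fin n → ℂ => A *ᵥ z + b) LA z :=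
    (LA.hasFDerivAt (x := z)).add_const b
  have hinv : HasFDerivAt (fun w : Fin n → ℂ => (den g' w)⁻¹)
      (((1 : ℂ →L[ℂ] ℂ).smulRight (-(den g' z ^ 2)⁻¹)).comp Lc) z :=
    (hasDerivAt_inv hz).hasFDerivAt.comp z hden
  have hsmul := hinv.smul hN
  refine ⟨_, hsmul, fun x => ?_⟩
  have hmact : mact g' z = (den g' z)⁻¹ • (A *ᵥ z + b) := rfl
  have hkey : A *ᵥ z + b = den g' z • mact g' z := by
    rw [hmact, smul_smul, mul_inv_cancel₀ hz, one_smul]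
  have hvm : ∀ i, ((A - vecMulVec (mact g' z) c) *ᵥ x) i
      = (A *ᵥ x) i - (c ⬝ᵥ x) * mact g' z i := by
    intro i
    simp [Matrix.sub_mulVec, Matrix.vecMulVec_apply, Matrix.mulVec, dotProduct,
      Finset.sum_sub_distrib, mul_sub, sub_mul, Finset.sum_mul, Finset.mul_sum,
      mul_comm, mul_left_comm]
  funext i
  simp only [ContinuousLinearMap.add_apply, ContinuousLinearMap.smul_apply,
    ContinuousLinearMap.smulRight_apply, ContinuousLinearMap.comp_apply,
    ContinuousLinearMap.one_apply, ContinuousLinearMap.coe_smul', Pi.smul_apply,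
    hLc, hLA, hkey, hvm, Pi.add_apply, Pi.sub_apply, smul_eq_mul]
  field_simp
  ring

/-- The Möbius map `z ↦ g·z` is holomorphic on `{z | c·z + d ≠ 0}` and its derivative
at `z` in direction `x` is `(c·z + d)⁻¹ • (A - (g·z)c) x`, i.e. the Jacobian at `z` is
`(c·z + d)⁻¹ K(g,z)` where `K(g,z) = A - (g·z)c`. -/
theorem mobius_hasFDerivAt (n : ℕ) (hn : 1 ≤ n) (g : GL (Fin n ⊕ Unit) ℂ) :
    DifferentiableOn ℂ (mact (g : Matrix (Fin n ⊕ Unit) (Fin n ⊕ Unit) ℂ))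
        {z : Fin n → ℂ | den (g : Matrix (Fin n ⊕ Unit) (Fin n ⊕ Unit) ℂ) z ≠ 0} ∧
      (∀ z : Fin n → ℂ, den (g : Matrix (Fin n ⊕ Unit) (Fin n ⊕ Unit) ℂ) z ≠ 0 →
        ∃ L : (Fin n → ℂ) →L[ℂ] (Fin n → ℂ),
          HasFDerivAt (mact (g : Matrix (Fin n ⊕ Unit) (Fin n ⊕ Unit) ℂ)) L z ∧
            ∀ x : Fin n → ℂ,
              L x = (den (g : Matrix (Fin n ⊕ Unit) (Fin n ⊕ Unit) ℂ) z)⁻¹ •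
                  ((Ablk (g : Matrix (Fin n ⊕ Unit) (Fin n ⊕ Unit) ℂ) -
                      vecMulVec (mact (g : Matrix (Fin n ⊕ Unit) (Fin n ⊕ Unit) ℂ) z)
                        (crow (g : Matrix (Fin n ⊕ Unit) (Fin n ⊕ Unit) ℂ))) *ᵥ x)) := by
  constructor
  · intro z hz
    obtain ⟨L, hL, -⟩ := mobius_key (g : Matrix (Fin n ⊕ Unit) (Fin n ⊕ Unit) ℂ) z hz
    exact hL.differentiableAt.differentiableWithinAt
  · intro z hz
    exact mobius_key _ z hz
end
end
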